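/- arXiv:2109.00578 — 3 statements merged into one kernel-verified Lean document; each statement's English description precedes it below -/
import Mathlib

section
/- Let f_1,…,f_r ∈ K[x_1,…,x_n] be homogeneous of degree t, I = ⟨f_1,…,f_r⟩, d ≥ 0, and s ≥ 0. Then I^{(t+d)} contains no nonzero polynomial with at most s terms if and only if for every subset S ⊆ M_{t+d}^n with |S| = |M_{t+d}^n| − s one has Span{p_α : α ∈ S} = Span{p_α : α ∈ M_{t+d}^n} inside the dual space of the space of r-tuples of degree-d homogeneous polynomials. -/
/-!
A homogeneous element of degree `t + d` of the ideal `⟨f_1, …, f_r⟩` is exactly a sum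
`∑ gᵢ fᵢ` with `gᵢ` homogeneous of degree `d`, and its coefficients are the values
`p_α(g)`, so its support is `{α ∈ M | p_α(g) ≠ 0}`. A support disjoint from `S` means
`g ∈ ⋂_{α ∈ S} ker p_α`, and for finitely many linear forms `span {p_α : α ∈ S}` contains
`span {p_α : α ∈ M}` iff that intersection lies in every `ker p_β`. Finally, a subset `Z`
of the finite set `M` has at most `s` elements iff it avoids some `S ⊆ M` with
`|S| = |M| - s`.
-/

/-- The linear form `p_α` extracting the coefficient of `x^α` from the polynomial
expression `∑ i, g i * f i`, viewed as a linear form on the space of `r`-tuples of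
homogeneous polynomials of degree `d`. -/
noncomputable def pForm {K : Type*} [Field K] {n r : ℕ}
    (f : Fin r → MvPolynomial (Fin n) K) (d : ℕ) (α : Fin n →₀ ℕ) :
    (Fin r → ↥(MvPolynomial.homogeneousSubmodule (Fin n) K d)) →ₗ[K] K where
  toFun g := MvPolynomial.coeff α (∑ i, (g i : MvPolynomial (Fin n) K) * f i)
  map_add' g h := by
    simp [add_mul, Finset.sum_add_distrib]
  map_smul' c g := by
    simp [smul_mul_assoc, ← Finset.smul_sum, MvPolynomial.coeff_smul, smul_eq_mul]

open MvPolynomial Submodule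

theorem Set.ncard_le_imp_eq_empty_iff_forall_disjoint {α : Type*} {M Z : Set α} (hM : M.Finite)
    (hZM : Z ⊆ M) (s : ℕ) :
    (Z.ncard ≤ s → Z = ∅) ↔ ∀ S ⊆ M, S.ncard = M.ncard - s → Disjoint Z S → Z = ∅ := by
  constructor
  · intro H S hSM hS hZS
    refine H ?_
    have hZ : Z.ncard ≤ (M \ S).ncard :=
      Set.ncard_le_ncard (Set.subset_sdiff.mpr ⟨hZM, hZS⟩) hM.sdiff
    have hMS := Set.ncard_sdiff_add_ncard_of_subset hSM hM
    omega
  · intro H hZ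
    have hMZ := Set.ncard_sdiff_add_ncard_of_subset hZM hM
    obtain ⟨S, hSMZ, hS⟩ := Set.exists_subset_card_eq (s := M \ Z) (n := M.ncard - s) (by omega)
    exact H S (hSMZ.trans Set.sdiff_subset) hS (Set.disjoint_sdiff_right.mono_right hSMZ)

section DualFamily

variable {K V ι : Type*} [Field K] [AddCommGroup V] [Module K V]

theorem span_image_eq_span_image_iff_forall_eq_zero (p : ι → Module.Dual K V) {S M : Set ι}
    (hSM : S ⊆ M) (hS : S.Finite) :
    span K (p '' S) = span K (p '' M) ↔ ∀ v, (∀ a ∈ S, p a v = 0) → ∀ b ∈ M, p b v = 0 := by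
  constructor
  · intro hspan v hv b hb
    have hle : span K (p '' M) ≤ LinearMap.ker (LinearMap.applyₗ v) := by
      rw [← hspan, span_le]
      rintro _ ⟨a, ha, rfl⟩
      exact hv a ha
    exact hle (subset_span ⟨b, hb, rfl⟩)
  · intro h
    refine le_antisymm (span_mono (Set.image_mono hSM)) (span_le.mpr ?_)
    rintro _ ⟨b, hb, rfl⟩
    have := hS.to_subtype
    rw [Set.image_eq_range]
    exact mem_span_of_iInf_ker_le_ker fun v hv =>
      h v (fun a ha => (mem_iInf _).mp hv ⟨a, ha⟩) b hb

theorem forall_ncard_le_imp_eq_empty_iff_span_image_eq (p : ι → Module.Dual K V) {M : Set ι}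
    (hM : M.Finite) (s : ℕ) :
    (∀ v, {a ∈ M | p a v ≠ 0}.ncard ≤ s → {a ∈ M | p a v ≠ 0} = ∅) ↔
      ∀ S ⊆ M, S.ncard = M.ncard - s → span K (p '' S) = span K (p '' M) := by
  have hdisj : ∀ v, ∀ S ⊆ M, Disjoint {a ∈ M | p a v ≠ 0} S ↔ ∀ a ∈ S, p a v = 0 :=
    fun v S hSM => Set.disjoint_right.trans (forall₂_congr fun a ha => by simp [hSM ha])
  have hempty : ∀ v, {a ∈ M | p a v ≠ 0} = ∅ ↔ ∀ b ∈ M, p b v = 0 := fun v => by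
    simp [Set.eq_empty_iff_forall_notMem]
  simp_rw [Set.ncard_le_imp_eq_empty_iff_forall_disjoint hM (Set.sep_subset M _), hempty]
  constructor
  · intro H S hSM hS
    rw [span_image_eq_span_image_iff_forall_eq_zero p hSM (hM.subset hSM)]
    exact fun v hv => H v S hSM hS ((hdisj v S hSM).mpr hv)
  · intro H v S hSM hS hvS
    exact (span_image_eq_span_image_iff_forall_eq_zero p hSM (hM.subset hSM)).mp (H S hSM hS) v
      ((hdisj v S hSM).mp hvS)

end DualFamily

theorem DirectSum.exists_sum_mul_eq_of_mem_span {ι A σ κ : Type*} [DecidableEq ι]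
    [AddRightCancelMonoid ι] [Semiring A] [SetLike σ A] [AddSubmonoidClass σ A] (𝒜 : ι → σ)
    [GradedRing 𝒜] [Fintype κ] {f : κ → A} {i j : ι} (hf : ∀ k, f k ∈ 𝒜 j) {a : A}
    (ha : a ∈ Ideal.span (Set.range f)) (ha' : a ∈ 𝒜 (i + j)) :
    ∃ g : κ → 𝒜 i, a = ∑ k, (g k : A) * f k := by
  obtain ⟨c, rfl⟩ := Ideal.mem_span_range_iff_exists_fun.mp ha
  refine ⟨fun k => decompose 𝒜 (c k) i, ?_⟩
  calc ∑ k, c k * f k = GradedRing.proj 𝒜 (i + j) (∑ k, c k * f k) :=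
        (decompose_of_mem_same 𝒜 ha').symm
    _ = ∑ k, GradedRing.proj 𝒜 (i + j) (c k * f k) := map_sum _ _ _
    _ = _ := Finset.sum_congr rfl fun k _ => coe_decompose_mul_add_of_right_mem 𝒜 (hf k)

theorem MvPolynomial.IsHomogeneous.sep_coeff_ne_zero_eq_support {σ R : Type*} [CommSemiring R]
    {φ : MvPolynomial σ R} {m : ℕ} (hφ : φ.IsHomogeneous m) :
    {α ∈ {α : σ →₀ ℕ | α.degree = m} | coeff α φ ≠ 0} = ↑φ.support := by
  ext α
  simp only [Set.mem_ofPred_eq, Finset.mem_coe, mem_support_iff, and_iff_right_iff_imp]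
  exact Not.imp_symm hφ.coeff_eq_zero

attribute [local instance] MvPolynomial.gradedAlgebra

/-- **Lemma 2.5.**  Let `f 1, …, f r` be homogeneous of degree `t`, `I = ⟨f 1, …, f r⟩`,
`d ≥ 0` and `s ≥ 0`.  The degree-`(t+d)` component `I^{(t+d)}` contains no nonzero
polynomial with at most `s` terms if and only if for every `S ⊆ M_{t+d}^n` with
`|S| = |M_{t+d}^n| - s` the spans of `{p_α : α ∈ S}` and `{p_α : α ∈ M_{t+d}^n}`
coincide in the dual space. -/
theorem no_short_polynomial_iff_spans_eq {K : Type*} [Field K] {n r t d s : ℕ}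
    (f : Fin r → MvPolynomial (Fin n) K) (hf : ∀ i, (f i).IsHomogeneous t)
    (M : Set (Fin n →₀ ℕ)) (hM : M = {α | (α.sum fun _ e => e) = t + d}) :
    (∀ h : MvPolynomial (Fin n) K, h ∈ Ideal.span (Set.range f) →
        h.IsHomogeneous (t + d) → h.support.card ≤ s → h = 0) ↔
      (∀ S ⊆ M, S.ncard = M.ncard - s →
        Submodule.span K (pForm f d '' S) = Submodule.span K (pForm f d '' M)) := by
  replace hM : M = {α | α.degree = t + d} := hM
  have hsum_homogeneous (g : Fin r → homogeneousSubmodule (Fin n) K d) :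
      (∑ i, (g i : MvPolynomial (Fin n) K) * f i).IsHomogeneous (t + d) := by
    rw [add_comm]
    exact IsHomogeneous.sum _ _ _ fun i _ => (g i).2.mul (hf i)
  have hsupport (g : Fin r → homogeneousSubmodule (Fin n) K d) :
      {α ∈ M | pForm f d α g ≠ 0} = ↑(∑ i, (g i : MvPolynomial (Fin n) K) * f i).support :=
    hM ▸ (hsum_homogeneous g).sep_coeff_ne_zero_eq_support
  rw [← forall_ncard_le_imp_eq_empty_iff_span_image_eq (pForm f d)
    (hM ▸ Finsupp.finite_of_degree_eq _) s]
  simp_rw [hsupport, Set.ncard_coe_finset, Finset.coe_eq_empty, support_eq_empty]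
  constructor
  · exact fun H g => H _ (Ideal.sum_mem _ fun i _ => Ideal.mul_mem_left _ _
      (Ideal.subset_span ⟨i, rfl⟩)) (hsum_homogeneous g)
  · intro H h hmem hhom
    obtain ⟨g, rfl⟩ := DirectSum.exists_sum_mul_eq_of_mem_span _ hf hmem
      (show h ∈ homogeneousSubmodule (Fin n) K (d + t) by rw [add_comm]; exact hhom)
    exact H g
end

section
/- Let f_1,…,f_r ∈ K[x_1,…,x_n] be homogeneous of degree t, I = ⟨f_1,…,f_r⟩, d ≥ 0, and s ≥ 0. Then I^{(t+d)} contains no nonzero polynomial with at most s terms if and only if for every subset S ⊆ M_{t+d}^n with |S| = |M_{t+d}^n| − s and every β ∈ M_{t+d}^n, the linear form p_β lies in Span{p_α : α ∈ S}, i.e., there exist scalars r_α ∈ K with p_β = ∑_{α∈S} r_α p_α. -/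
/-!
The degree-`t + d` part of `I` is the image of `g ↦ ∑ gᵢ fᵢ` on `r`-tuples of forms of degree `d`
(take degree-`d` components of arbitrary cofactors), and `p_α` is the `α`-th coefficient of this
map. Since finitely many linear forms span every form vanishing on their common kernel,
`p_β ∈ Span {p_α : α ∈ S}` says that each element of `I^{(t+d)}` whose support misses `S` has
no `x^β` term. Over all `β` this says it is zero, and a support of size at most `s` inside
`M_{t+d}^n` is exactly one that misses some `S` with `|S| = |M_{t+d}^n| - s`.
-/

open MvPolynomial

section
variable {σ R : Type*} [CommSemiring R]

attribute [local instance] MvPolynomial.gradedAlgebra in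
theorem MvPolynomial.homogeneousComponent_add_mul_of_isHomogeneous {f : MvPolynomial σ R}
    {t : ℕ} (hf : f.IsHomogeneous t) (d : ℕ) (c : MvPolynomial σ R) :
    homogeneousComponent (d + t) (c * f) = homogeneousComponent d c * f := by
  simpa only [DirectSum.decompose, Equiv.coe_fn_mk, decomposition.decompose'_apply] using
    DirectSum.coe_decompose_mul_add_of_right_mem (homogeneousSubmodule σ R) (a := c) (i := d) hf

theorem MvPolynomial.IsHomogeneous.coe_support_subset {p : MvPolynomial σ R} {n : ℕ}
    (hp : p.IsHomogeneous n) : (p.support : Set (σ →₀ ℕ)) ⊆ {α | α.degree = n} :=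
  fun _ hα => by_contra fun hne => mem_support_iff.1 hα (hp.coeff_eq_zero hne)

theorem MvPolynomial.mem_span_range_and_isHomogeneous_iff {ι : Type*} [Fintype ι]
    {f : ι → MvPolynomial σ R} {t : ℕ} (hf : ∀ i, (f i).IsHomogeneous t) (d : ℕ)
    (h : MvPolynomial σ R) :
    h ∈ Ideal.span (Set.range f) ∧ h.IsHomogeneous (d + t) ↔
      ∃ g : ι → homogeneousSubmodule σ R d, ∑ i, (g i : MvPolynomial σ R) * f i = h := by
  constructor
  · rintro ⟨hI, hh⟩
    obtain ⟨c, rfl⟩ := Ideal.mem_span_range_iff_exists_fun.1 hI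
    refine ⟨fun i => ⟨homogeneousComponent d (c i), homogeneousComponent_mem d (c i)⟩, ?_⟩
    simp only [← homogeneousComponent_add_mul_of_isHomogeneous (hf _), ← map_sum,
      homogeneousComponent_eq_self hh]
  · rintro ⟨g, rfl⟩
    exact ⟨Ideal.sum_mem _ fun i _ => Ideal.mul_mem_left _ _ (Ideal.subset_span ⟨i, rfl⟩),
      IsHomogeneous.sum _ _ _ fun i _ => (g i).2.mul (hf i)⟩

theorem MvPolynomial.forall_mem_coeff_eq_zero_iff {p : MvPolynomial σ R} {M : Set (σ →₀ ℕ)}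
    (hp : (p.support : Set (σ →₀ ℕ)) ⊆ M) : (∀ β ∈ M, coeff β p = 0) ↔ p = 0 := by
  refine ⟨fun h => ?_, fun h β _ => by rw [h, coeff_zero]⟩
  ext β
  by_cases hβ : β ∈ p.support
  · exact h β (hp hβ)
  · exact notMem_support_iff.1 hβ

end

theorem Submodule.mem_span_image_iff_forall_eq_zero {ι 𝕜 E : Type*} [Field 𝕜] [AddCommGroup E]
    [Module 𝕜 E] (L : ι → E →ₗ[𝕜] 𝕜) {S : Set ι} (hS : S.Finite) (φ : E →ₗ[𝕜] 𝕜) :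
    φ ∈ span 𝕜 (L '' S) ↔ ∀ x, (∀ α ∈ S, L α x = 0) → φ x = 0 := by
  constructor
  · intro hφ x hx
    have : span 𝕜 (L '' S) ≤ LinearMap.ker (LinearMap.applyₗ x) := by
      rw [span_le]
      rintro _ ⟨α, hα, rfl⟩
      exact hx α hα
    exact this hφ
  · intro h
    have := hS.to_subtype
    rw [Set.image_eq_range]
    refine mem_span_of_iInf_ker_le_ker fun x hx => h x fun α hα => ?_
    exact (mem_iInf _).1 hx ⟨α, hα⟩

theorem Set.exists_subset_ncard_eq_sub_disjoint_iff {α : Type*} {M T : Set α} (hM : M.Finite)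
    (hT : T ⊆ M) (s : ℕ) :
    (∃ S ⊆ M, S.ncard = M.ncard - s ∧ Disjoint S T) ↔ T.ncard ≤ s := by
  have hTM := ncard_le_ncard hT hM
  constructor
  · rintro ⟨S, hSM, hS, hST⟩
    have hSM' := ncard_le_ncard hSM hM
    have : T.ncard ≤ (M \ S).ncard := ncard_le_ncard (subset_sdiff.2 ⟨hT, hST.symm⟩) hM.sdiff
    rw [ncard_sdiff hSM (hM.subset hSM)] at this
    omega
  · intro hs
    obtain ⟨S, hS, hcard⟩ := exists_subset_card_eq (s := M \ T) (n := M.ncard - s)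
      (by rw [ncard_sdiff hT (hM.subset hT)]; omega)
    exact ⟨S, hS.trans sdiff_subset, hcard, (subset_sdiff.1 hS).2⟩

theorem pForm_mem_span_image_iff {K : Type*} [Field K] {n r : ℕ}
    (f : Fin r → MvPolynomial (Fin n) K) (d : ℕ) {S : Set (Fin n →₀ ℕ)} (hS : S.Finite)
    (β : Fin n →₀ ℕ) :
    pForm f d β ∈ Submodule.span K (pForm f d '' S) ↔
      ∀ g : Fin r → homogeneousSubmodule (Fin n) K d,
        Disjoint S (∑ i, (g i : MvPolynomial (Fin n) K) * f i).support →
          coeff β (∑ i, (g i : MvPolynomial (Fin n) K) * f i) = 0 := by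
  rw [Submodule.mem_span_image_iff_forall_eq_zero _ hS]
  simp [Set.disjoint_left, pForm]

/-- **Lemma 2.8.**  Let `f 1, …, f r` be homogeneous of degree `t`, `I = ⟨f 1, …, f r⟩`,
`d ≥ 0` and `s ≥ 0`.  The vector space `I^{(t+d)}` contains no nonzero polynomial with at
most `s` terms if and only if for every `S ⊆ M_{t+d}^n` with `|S| = |M_{t+d}^n| - s` and
every `β ∈ M_{t+d}^n`, the linear form `p_β` is a linear combination of the `p_α`, `α ∈ S`,
i.e. `p_β` lies in their span. -/
theorem no_short_polynomial_iff_linear_combination {K : Type*} [Field K] {n r t d s : ℕ}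
    (f : Fin r → MvPolynomial (Fin n) K) (hf : ∀ i, (f i).IsHomogeneous t)
    (M : Set (Fin n →₀ ℕ)) (hM : M = {α | (α.sum fun _ e => e) = t + d}) :
    (∀ h : MvPolynomial (Fin n) K, h ∈ Ideal.span (Set.range f) →
        h.IsHomogeneous (t + d) → h.support.card ≤ s → h = 0) ↔
      (∀ S ⊆ M, S.ncard = M.ncard - s → ∀ β ∈ M,
        pForm f d β ∈ Submodule.span K (pForm f d '' S)) := by
  set Φ := fun g : Fin r → homogeneousSubmodule (Fin n) K d => ∑ i, (g i : MvPolynomial _ K) * f i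
  have hM' : M = {α | α.degree = d + t} := by rw [hM, add_comm]; rfl
  have hMfin : M.Finite := hM' ▸ (Finsupp.finite_of_degree_le _).subset fun _ => le_of_eq
  have hcomb (h) := mem_span_range_and_isHomogeneous_iff hf d h
  have hΦM (g) : ((Φ g).support : Set _) ⊆ M :=
    hM' ▸ ((hcomb _).2 ⟨g, rfl⟩).2.coe_support_subset
  have hspan (S) (hSM : S ⊆ M) := pForm_mem_span_image_iff f d (hMfin.subset hSM)
  rw [add_comm t d]
  calc _ ↔ ∀ g, (Φ g).support.card ≤ s → Φ g = 0 :=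
        ⟨fun H g => H _ ((hcomb _).2 ⟨g, rfl⟩).1 ((hcomb _).2 ⟨g, rfl⟩).2,
          fun H h hI hh => by obtain ⟨g, rfl⟩ := (hcomb h).1 ⟨hI, hh⟩; exact H g⟩
    _ ↔ ∀ g, ∀ S ⊆ M, S.ncard = M.ncard - s → Disjoint S (Φ g).support → Φ g = 0 := by
        refine forall_congr' fun g => ?_
        rw [← Set.ncard_coe_finset, ← Set.exists_subset_ncard_eq_sub_disjoint_iff hMfin (hΦM g)]
        simp only [forall_exists_index, and_imp]
    _ ↔ _ := by
        refine ⟨fun H S hSM hS β _ => (hspan S hSM β).2 fun g hg => ?_,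
          fun H g S hSM hS hg => (forall_mem_coeff_eq_zero_iff (hΦM g)).1 fun β hβ =>
            (hspan S hSM β).1 (H S hSM hS β hβ) g hg⟩
        exact (congrArg (coeff β) (H g S hSM hS hg)).trans (coeff_zero β)
end

section
/- For every integer n ≥ 1, the binomial x^n − y z^{n−1} lies in the ideal I_n = ⟨(x−z)^2, n·x − y − (n−1)·z⟩ of ℚ[x,y,z]. -/
open MvPolynomial

lemma binomial_aux (m : ℕ) : ∃ q : MvPolynomial (Fin 3) ℚ,
    (X 0 : MvPolynomial (Fin 3) ℚ) ^ (m + 1)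
      - ((m : MvPolynomial (Fin 3) ℚ) + 1) * X 0 * X 2 ^ m
      + (m : MvPolynomial (Fin 3) ℚ) * X 2 ^ (m + 1)
      = (X 0 - X 2) ^ 2 * q := by
  induction m with
  | zero => exact ⟨0, by push_cast; ring⟩
  | succ m ih =>
    obtain ⟨q, hq⟩ := ih
    refine ⟨X 0 * q + ((m : MvPolynomial (Fin 3) ℚ) + 1) * X 2 ^ m, ?_⟩
    push_cast at hq ⊢
    linear_combination (X 0 : MvPolynomial (Fin 3) ℚ) * hq

/-- For every `n ≥ 1`, the binomial `x^n - y z^(n-1)` lies in the ideal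
`I_n = ⟨(x - z)^2, n x - y - (n - 1) z⟩` of `ℚ[x, y, z]`. -/
theorem binomial_mem_ideal (n : ℕ) (hn : 1 ≤ n) :
    (X 0 : MvPolynomial (Fin 3) ℚ) ^ n - X 1 * X 2 ^ (n - 1) ∈
      Ideal.span {((X 0 - X 2) ^ 2 : MvPolynomial (Fin 3) ℚ),
        (n : MvPolynomial (Fin 3) ℚ) * X 0 - X 1 -
          ((n : MvPolynomial (Fin 3) ℚ) - 1) * X 2} := by
  obtain ⟨m, rfl⟩ := Nat.exists_eq_add_of_le hn
  obtain ⟨q, hq⟩ := binomial_aux m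
  rw [Ideal.mem_span_pair]
  refine ⟨q, X 2 ^ m, ?_⟩
  have h1 : 1 + m - 1 = m := by omega
  rw [h1]
  push_cast at hq ⊢
  linear_combination -hq
end
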